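/- Let v : ℝ^m → ℝ^n be smooth, r ≥ 1, and define h : ℝ^m × ℝ^m → ℝ^n by h(x, y) = (y_1 - x_1)^r · v(x). Then for multi-indices α (in the x-variables) and β (in the y-variables) with |α| + |β| ≤ r, writing M for the number of times the index 1 occurs in α and N for the number of times 1 occurs in β, there is a constant C depending only on m, r, and the C^r norm of v, such that for all δ > 0 and all (x, y) with |y_1 - x_1| < δ ≤ 1 one has ‖∂_α^x ∂_β^y h(x, y)‖ ≤ C · δ^{r - (M + N)}. -/

import Mathlib

/-- Partial derivative of `f` in the `j`-th direction of the first (`x`) factor. -/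
noncomputable def pderX {m n : ℕ} (j : Fin m)
    (f : (Fin m → ℝ) × (Fin m → ℝ) → EuclideanSpace ℝ (Fin n)) :
    (Fin m → ℝ) × (Fin m → ℝ) → EuclideanSpace ℝ (Fin n) :=
  fun p => fderiv ℝ f p (Pi.single j 1, 0)

/-- Partial derivative of `f` in the `j`-th direction of the second (`y`) factor. -/
noncomputable def pderY {m n : ℕ} (j : Fin m)
    (f : (Fin m → ℝ) × (Fin m → ℝ) → EuclideanSpace ℝ (Fin n)) :
    (Fin m → ℝ) × (Fin m → ℝ) → EuclideanSpace ℝ (Fin n) :=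
  fun p => fderiv ℝ f p (0, Pi.single j 1)

/-- Iterated `x`-partial derivatives indexed by a multi-index (list of coordinate indices). -/
noncomputable def pdersX {m n : ℕ} (l : List (Fin m))
    (f : (Fin m → ℝ) × (Fin m → ℝ) → EuclideanSpace ℝ (Fin n)) :
    (Fin m → ℝ) × (Fin m → ℝ) → EuclideanSpace ℝ (Fin n) :=
  l.foldr pderX f

/-- Iterated `y`-partial derivatives indexed by a multi-index (list of coordinate indices). -/
noncomputable def pdersY {m n : ℕ} (l : List (Fin m))
    (f : (Fin m → ℝ) × (Fin m → ℝ) → EuclideanSpace ℝ (Fin n)) :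
    (Fin m → ℝ) × (Fin m → ℝ) → EuclideanSpace ℝ (Fin n) :=
  l.foldr pderY f

/-! ### Auxiliary development -/

section Aux

variable {m n : ℕ}

/-- Iterated directional derivatives of `v` itself. -/
noncomputable def uD (v : (Fin m → ℝ) → EuclideanSpace ℝ (Fin n)) :
    List (Fin m) → ((Fin m → ℝ) → EuclideanSpace ℝ (Fin n))
  | [] => v
  | j :: γ => fun x => fderiv ℝ (uD v γ) x (Pi.single j 1)

lemma uD_contDiff {v : (Fin m → ℝ) → EuclideanSpace ℝ (Fin n)} (hv : ContDiff ℝ (⊤ : ℕ∞) v) :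
    ∀ γ : List (Fin m), ContDiff ℝ (⊤ : ℕ∞) (uD v γ)
  | [] => hv
  | j :: γ => ((uD_contDiff hv γ).fderiv_right (by simp)).clm_apply contDiff_const

lemma uD_diff {v : (Fin m → ℝ) → EuclideanSpace ℝ (Fin n)} (hv : ContDiff ℝ (⊤ : ℕ∞) v)
    (γ : List (Fin m)) : Differentiable ℝ (uD v γ) :=
  (uD_contDiff hv γ).differentiable (by simp)

/-- The linear map `p ↦ p.2 i - p.1 i`. -/
noncomputable def Lphi (m : ℕ) (i : Fin m) :
    ((Fin m → ℝ) × (Fin m → ℝ)) →L[ℝ] ℝ :=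
  (ContinuousLinearMap.proj i).comp (ContinuousLinearMap.snd ℝ _ _) -
  (ContinuousLinearMap.proj i).comp (ContinuousLinearMap.fst ℝ _ _)

@[simp] lemma Lphi_apply (i : Fin m) (p : (Fin m → ℝ) × (Fin m → ℝ)) :
    Lphi m i p = p.2 i - p.1 i := rfl

/-- The basic monomial. -/
noncomputable def TT (v : (Fin m → ℝ) → EuclideanSpace ℝ (Fin n)) (i : Fin m) (k : ℕ)
    (γ : List (Fin m)) : (Fin m → ℝ) × (Fin m → ℝ) → EuclideanSpace ℝ (Fin n) :=
  fun p => (p.2 i - p.1 i) ^ k • uD v γ p.1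

lemma TT_hasFDerivAt {v : (Fin m → ℝ) → EuclideanSpace ℝ (Fin n)} (hv : ContDiff ℝ (⊤ : ℕ∞) v)
    (i : Fin m) (k : ℕ) (γ : List (Fin m)) (p : (Fin m → ℝ) × (Fin m → ℝ)) :
    HasFDerivAt (TT v i k γ)
      ((p.2 i - p.1 i) ^ k • ((fderiv ℝ (uD v γ) p.1).comp (ContinuousLinearMap.fst ℝ _ _)) +
        (((k : ℝ) * (p.2 i - p.1 i) ^ (k - 1)) • Lphi m i).smulRight (uD v γ p.1)) p := by
  have hu : HasFDerivAt (fun q : (Fin m → ℝ) × (Fin m → ℝ) => uD v γ q.1)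
      ((fderiv ℝ (uD v γ) p.1).comp (ContinuousLinearMap.fst ℝ _ _)) p :=
    ((uD_diff hv γ p.1).hasFDerivAt).comp p hasFDerivAt_fst
  have hφ : HasFDerivAt (fun q : (Fin m → ℝ) × (Fin m → ℝ) => q.2 i - q.1 i) (Lphi m i) p :=
    (Lphi m i).hasFDerivAt
  have hc : HasFDerivAt (fun q : (Fin m → ℝ) × (Fin m → ℝ) => (q.2 i - q.1 i) ^ k)
      (((k : ℝ) * (p.2 i - p.1 i) ^ (k - 1)) • Lphi m i) p := by
    simpa [Function.comp_def] using
      (hasDerivAt_pow k (p.2 i - p.1 i)).comp_hasFDerivAt p hφ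
  exact hc.smul hu

lemma TT_diff {v : (Fin m → ℝ) → EuclideanSpace ℝ (Fin n)} (hv : ContDiff ℝ (⊤ : ℕ∞) v)
    (i : Fin m) (k : ℕ) (γ : List (Fin m)) : Differentiable ℝ (TT v i k γ) :=
  fun p => (TT_hasFDerivAt hv i k γ p).differentiableAt

lemma pderX_TT {v : (Fin m → ℝ) → EuclideanSpace ℝ (Fin n)} (hv : ContDiff ℝ (⊤ : ℕ∞) v)
    (i j : Fin m) (k : ℕ) (γ : List (Fin m)) :
    pderX j (TT v i k γ) =
      fun p => TT v i k (j :: γ) p + (if i = j then -(k : ℝ) else 0) • TT v i (k - 1) γ p := by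
  funext p
  have := (TT_hasFDerivAt hv i k γ p).fderiv
  simp only [pderX, this]
  by_cases hij : i = j <;>
    simp [TT, uD, hij, Pi.single_apply, smul_smul, add_comm, mul_comm, mul_assoc, mul_left_comm]

lemma pderY_TT {v : (Fin m → ℝ) → EuclideanSpace ℝ (Fin n)} (hv : ContDiff ℝ (⊤ : ℕ∞) v)
    (i j : Fin m) (k : ℕ) (γ : List (Fin m)) :
    pderY j (TT v i k γ) =
      fun p => (if i = j then (k : ℝ) else 0) • TT v i (k - 1) γ p := by
  funext p
  have := (TT_hasFDerivAt hv i k γ p).fderiv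
  simp only [pderY, this]
  by_cases hij : i = j <;>
    simp [TT, uD, hij, Pi.single_apply, smul_smul, mul_comm, mul_assoc, mul_left_comm]

/-- Sums of monomials. -/
noncomputable def TS (v : (Fin m → ℝ) → EuclideanSpace ℝ (Fin n)) (i : Fin m)
    (L : List (ℝ × ℕ × List (Fin m))) : (Fin m → ℝ) × (Fin m → ℝ) → EuclideanSpace ℝ (Fin n) :=
  fun p => (L.map (fun t => t.1 • TT v i t.2.1 t.2.2 p)).sum

lemma TS_nil (v : (Fin m → ℝ) → EuclideanSpace ℝ (Fin n)) (i : Fin m) :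
    TS v i [] = fun _ => 0 := rfl

lemma TS_cons (v : (Fin m → ℝ) → EuclideanSpace ℝ (Fin n)) (i : Fin m) (t) (L) :
    TS v i (t :: L) = fun p => t.1 • TT v i t.2.1 t.2.2 p + TS v i L p := rfl

lemma TS_diff {v : (Fin m → ℝ) → EuclideanSpace ℝ (Fin n)} (hv : ContDiff ℝ (⊤ : ℕ∞) v)
    (i : Fin m) : ∀ L, Differentiable ℝ (TS v i L)
  | [] => by simpa [TS_nil] using differentiable_const (0 : EuclideanSpace ℝ (Fin n))
  | t :: L => by
      rw [TS_cons]
      exact ((TT_diff hv i t.2.1 t.2.2).const_smul t.1).add (TS_diff hv i L)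

lemma pderX_add {f g : (Fin m → ℝ) × (Fin m → ℝ) → EuclideanSpace ℝ (Fin n)}
    (hf : Differentiable ℝ f) (hg : Differentiable ℝ g) (j : Fin m) :
    pderX j (fun p => f p + g p) = fun p => pderX j f p + pderX j g p := by
  funext p
  simp only [pderX]
  rw [fderiv_fun_add (hf p) (hg p)]
  rfl

lemma pderY_add {f g : (Fin m → ℝ) × (Fin m → ℝ) → EuclideanSpace ℝ (Fin n)}
    (hf : Differentiable ℝ f) (hg : Differentiable ℝ g) (j : Fin m) :
    pderY j (fun p => f p + g p) = fun p => pderY j f p + pderY j g p := by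
  funext p
  simp only [pderY]
  rw [fderiv_fun_add (hf p) (hg p)]
  rfl

lemma pderX_smul {f : (Fin m → ℝ) × (Fin m → ℝ) → EuclideanSpace ℝ (Fin n)}
    (hf : Differentiable ℝ f) (c : ℝ) (j : Fin m) :
    pderX j (fun p => c • f p) = fun p => c • pderX j f p := by
  funext p
  simp only [pderX]
  rw [fderiv_fun_const_smul (hf p)]
  rfl

lemma pderY_smul {f : (Fin m → ℝ) × (Fin m → ℝ) → EuclideanSpace ℝ (Fin n)}
    (hf : Differentiable ℝ f) (c : ℝ) (j : Fin m) :
    pderY j (fun p => c • f p) = fun p => c • pderY j f p := by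
  funext p
  simp only [pderY]
  rw [fderiv_fun_const_smul (hf p)]
  rfl

/-- One `x`-derivative step on the list of terms. -/
def stepX (i j : Fin m) (L : List (ℝ × ℕ × List (Fin m))) : List (ℝ × ℕ × List (Fin m)) :=
  L.flatMap fun t =>
    [(t.1, t.2.1, j :: t.2.2), ((if i = j then -(t.2.1 : ℝ) else 0) * t.1, t.2.1 - 1, t.2.2)]

/-- One `y`-derivative step on the list of terms. -/
def stepY (i j : Fin m) (L : List (ℝ × ℕ × List (Fin m))) : List (ℝ × ℕ × List (Fin m)) :=
  L.map fun t => ((if i = j then (t.2.1 : ℝ) else 0) * t.1, t.2.1 - 1, t.2.2)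

lemma pderX_TS {v : (Fin m → ℝ) → EuclideanSpace ℝ (Fin n)} (hv : ContDiff ℝ (⊤ : ℕ∞) v)
    (i j : Fin m) : ∀ L, pderX j (TS v i L) = TS v i (stepX i j L)
  | [] => by
      funext p
      simp [TS_nil, stepX, pderX, fderiv_const]
  | t :: L => by
      rw [TS_cons,
        pderX_add (f := fun p => t.1 • TT v i t.2.1 t.2.2 p) ((TT_diff hv i t.2.1 t.2.2).const_smul t.1) (TS_diff hv i L) j,
        pderX_smul (TT_diff hv i t.2.1 t.2.2) t.1 j, pderX_TT hv i j t.2.1 t.2.2,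
        pderX_TS hv i j L]
      funext p
      simp only [stepX, List.flatMap_cons, TS, List.map_append, List.sum_append, List.map_cons,
        List.sum_cons, List.map_nil, List.sum_nil, add_zero, smul_add, smul_smul]
      rw [mul_comm]

lemma pderY_TS {v : (Fin m → ℝ) → EuclideanSpace ℝ (Fin n)} (hv : ContDiff ℝ (⊤ : ℕ∞) v)
    (i j : Fin m) : ∀ L, pderY j (TS v i L) = TS v i (stepY i j L)
  | [] => by
      funext p
      simp [TS_nil, stepY, pderY, fderiv_const]
  | t :: L => by
      rw [TS_cons,
        pderY_add (f := fun p => t.1 • TT v i t.2.1 t.2.2 p) ((TT_diff hv i t.2.1 t.2.2).const_smul t.1) (TS_diff hv i L) j,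
        pderY_smul (TT_diff hv i t.2.1 t.2.2) t.1 j, pderY_TT hv i j t.2.1 t.2.2,
        pderY_TS hv i j L]
      funext p
      simp only [stepY, TS, List.map_cons, List.sum_cons, smul_smul]
      rw [mul_comm]

/-- The list of terms representing `pdersX α (pdersY β h)`. -/
def RL (r : ℕ) (i : Fin m) (α β : List (Fin m)) : List (ℝ × ℕ × List (Fin m)) :=
  α.foldr (fun j L => stepX i j L) (β.foldr (fun j L => stepY i j L) [(1, r, [])])

end Aux

section Aux2

variable {m n : ℕ}

lemma uD_eq {v : (Fin m → ℝ) → EuclideanSpace ℝ (Fin n)} (hv : ContDiff ℝ (⊤ : ℕ∞) v) :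
    ∀ γ : List (Fin m), pdersX γ (fun p => v p.1) = fun p => uD v γ p.1
  | [] => rfl
  | j :: γ => by
      have h1 : pdersX (j :: γ) (fun p => v p.1) = pderX j (pdersX γ (fun p => v p.1)) := rfl
      rw [h1, uD_eq hv γ]
      funext p
      have hu : HasFDerivAt (fun q : (Fin m → ℝ) × (Fin m → ℝ) => uD v γ q.1)
          ((fderiv ℝ (uD v γ) p.1).comp (ContinuousLinearMap.fst ℝ _ _)) p :=
        ((uD_diff hv γ p.1).hasFDerivAt).comp p hasFDerivAt_fst
      simp only [pderX, hu.fderiv]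
      simp [uD]

/-- Sum of absolute values of the coefficients. -/
def csum (L : List (ℝ × ℕ × List (Fin m))) : ℝ := (L.map fun t => |t.1|).sum

lemma csum_nonneg (L : List (ℝ × ℕ × List (Fin m))) : 0 ≤ csum L := by
  induction L with
  | nil => simp [csum]
  | cons t L ih =>
      have : csum (t :: L) = |t.1| + csum L := by simp [csum]
      rw [this]
      have := abs_nonneg t.1
      linarith

lemma csum_stepX (r : ℕ) (i j : Fin m) :
    ∀ L : List (ℝ × ℕ × List (Fin m)), (∀ t ∈ L, t.1 = 0 ∨ t.2.1 ≤ r) →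
      csum (stepX i j L) ≤ ((r : ℝ) + 1) * csum L
  | [], _ => by simp [stepX, csum]
  | t :: L, h => by
      have ih := csum_stepX r i j L (fun s hs => h s (List.mem_cons_of_mem _ hs))
      have hc : csum (stepX i j (t :: L)) =
          |t.1| + |(if i = j then -(t.2.1 : ℝ) else 0) * t.1| + csum (stepX i j L) := by
        simp [stepX, csum, add_assoc]
      have hcs : csum (t :: L) = |t.1| + csum L := by simp [csum]
      have hterm : |(if i = j then -(t.2.1 : ℝ) else 0) * t.1| ≤ (r : ℝ) * |t.1| := by
        rcases h t List.mem_cons_self with h0 | hk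
        · simp [h0]
        · rw [abs_mul]
          have h1 : |(if i = j then -(t.2.1 : ℝ) else 0)| ≤ (r : ℝ) := by
            by_cases hij : i = j <;> simp [hij]
            exact_mod_cast hk
          exact mul_le_mul_of_nonneg_right h1 (abs_nonneg _)
      rw [hc, hcs]
      have h0 := abs_nonneg t.1
      nlinarith [csum_nonneg L, csum_nonneg (stepX i j L)]

lemma csum_stepY (r : ℕ) (i j : Fin m) :
    ∀ L : List (ℝ × ℕ × List (Fin m)), (∀ t ∈ L, t.1 = 0 ∨ t.2.1 ≤ r) →
      csum (stepY i j L) ≤ ((r : ℝ) + 1) * csum L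
  | [], _ => by simp [stepY, csum]
  | t :: L, h => by
      have ih := csum_stepY r i j L (fun s hs => h s (List.mem_cons_of_mem _ hs))
      have hc : csum (stepY i j (t :: L)) =
          |(if i = j then (t.2.1 : ℝ) else 0) * t.1| + csum (stepY i j L) := by
        simp [stepY, csum]
      have hcs : csum (t :: L) = |t.1| + csum L := by simp [csum]
      have hterm : |(if i = j then (t.2.1 : ℝ) else 0) * t.1| ≤ (r : ℝ) * |t.1| := by
        rcases h t List.mem_cons_self with h0 | hk
        · simp [h0]
        · rw [abs_mul]
          have h1 : |(if i = j then (t.2.1 : ℝ) else 0)| ≤ (r : ℝ) := by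
            by_cases hij : i = j <;> simp [hij]
            exact_mod_cast hk
          exact mul_le_mul_of_nonneg_right h1 (abs_nonneg _)
      rw [hc, hcs]
      have h0 := abs_nonneg t.1
      nlinarith [csum_nonneg L, csum_nonneg (stepY i j L)]

/-- Invariant of the term lists. -/
def InvL (r e a : ℕ) (L : List (ℝ × ℕ × List (Fin m))) : Prop :=
  ∀ t ∈ L, t.1 = 0 ∨ (r ≤ t.2.1 + e ∧ t.2.1 ≤ r ∧ t.2.2.length ≤ a)

lemma Inv_mono {r e a e' a' : ℕ} {L : List (ℝ × ℕ × List (Fin m))} (he : e ≤ e') (ha : a ≤ a')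
    (h : InvL r e a L) : InvL r e' a' L := by
  intro t ht
  rcases h t ht with h0 | ⟨h1, h2, h3⟩
  · exact Or.inl h0
  · exact Or.inr ⟨by omega, h2, by omega⟩

lemma Inv_stepX {r e a : ℕ} {L : List (ℝ × ℕ × List (Fin m))} (i j : Fin m)
    (h : InvL r e a L) :
    InvL r (e + (if j = i then 1 else 0)) (a + 1) (stepX i j L) := by
  intro t ht
  simp only [stepX, List.mem_flatMap, List.mem_cons, List.not_mem_nil, or_false] at ht
  obtain ⟨s, hs, hts⟩ := ht
  rcases h s hs with h0 | ⟨h1, h2, h3⟩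
  · rcases hts with rfl | rfl
    · exact Or.inl h0
    · exact Or.inl (by simp [h0])
  · rcases hts with rfl | rfl
    · refine Or.inr ⟨?_, ?_, ?_⟩
      · dsimp only; omega
      · exact h2
      · dsimp only; simp only [List.length_cons]; omega
    · by_cases hij : i = j
      · by_cases hk : s.2.1 = 0
        · exact Or.inl (by simp [hk])
        · have h5 : (if j = i then (1:ℕ) else 0) = 1 := if_pos hij.symm
          refine Or.inr ⟨?_, ?_, ?_⟩
          · dsimp only; omega
          · dsimp only; omega
          · dsimp only; omega
      · exact Or.inl (by simp [hij])

lemma Inv_stepY {r e a : ℕ} {L : List (ℝ × ℕ × List (Fin m))} (i j : Fin m)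
    (h : InvL r e a L) :
    InvL r (e + (if j = i then 1 else 0)) a (stepY i j L) := by
  intro t ht
  simp only [stepY, List.mem_map] at ht
  obtain ⟨s, hs, rfl⟩ := ht
  rcases h s hs with h0 | ⟨h1, h2, h3⟩
  · exact Or.inl (by simp [h0])
  · by_cases hij : i = j
    · by_cases hk : s.2.1 = 0
      · exact Or.inl (by simp [hk])
      · have h5 : (if j = i then (1:ℕ) else 0) = 1 := if_pos hij.symm
        refine Or.inr ⟨?_, ?_, ?_⟩
        · dsimp only; omega
        · dsimp only; omega
        · dsimp only; omega
    · exact Or.inl (by simp [hij])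

lemma Inv_foldY (r : ℕ) (i : Fin m) :
    ∀ β : List (Fin m), InvL r (β.count i) 0 (β.foldr (fun j L => stepY i j L) [(1, r, [])])
  | [] => by
      intro t ht
      simp only [List.foldr, List.mem_singleton] at ht
      subst ht
      exact Or.inr ⟨by simp, le_refl r, by simp⟩
  | j :: β => by
      have ih := Inv_foldY r i β
      have := Inv_stepY (L := β.foldr (fun j L => stepY i j L) [(1, r, [])]) i j ih
      have hc : (j :: β).count i = β.count i + (if j = i then 1 else 0) := by
        simp [List.count_cons]
      rw [hc]
      exact this

lemma Inv_RL (r : ℕ) (i : Fin m) :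
    ∀ α β : List (Fin m), InvL r (α.count i + β.count i) α.length (RL r i α β)
  | [], β => by
      simpa [RL] using Inv_foldY r i β
  | j :: α, β => by
      have ih := Inv_RL r i α β
      have := Inv_stepX (L := RL r i α β) i j ih
      have hc : (j :: α).count i + β.count i =
          (α.count i + β.count i) + (if j = i then 1 else 0) := by
        simp [List.count_cons]
        omega
      rw [hc]
      exact this

lemma csum_foldY (r : ℕ) (i : Fin m) :
    ∀ β : List (Fin m),
      csum (β.foldr (fun j L => stepY i j L) [(1, r, [])]) ≤ ((r : ℝ) + 1) ^ β.length
  | [] => by simp [csum]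
  | j :: β => by
      have ih := csum_foldY r i β
      have hinv := Inv_foldY r i β
      have hstep := csum_stepY r i j (β.foldr (fun j L => stepY i j L) [(1, r, [])])
        (fun t ht => (hinv t ht).imp id (fun h => h.2.1))
      calc csum ((j :: β).foldr (fun j L => stepY i j L) [(1, r, [])])
          ≤ ((r : ℝ) + 1) * csum (β.foldr (fun j L => stepY i j L) [(1, r, [])]) := hstep
        _ ≤ ((r : ℝ) + 1) * ((r : ℝ) + 1) ^ β.length := by
            apply mul_le_mul_of_nonneg_left ih
            positivity
        _ = ((r : ℝ) + 1) ^ (j :: β).length := by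
            rw [List.length_cons, pow_succ]
            ring

lemma csum_RL (r : ℕ) (i : Fin m) :
    ∀ α β : List (Fin m), csum (RL r i α β) ≤ ((r : ℝ) + 1) ^ (α.length + β.length)
  | [], β => by simpa [RL] using csum_foldY r i β
  | j :: α, β => by
      have ih := csum_RL r i α β
      have hinv := Inv_RL r i α β
      have hstep := csum_stepX r i j (RL r i α β)
        (fun t ht => (hinv t ht).imp id (fun h => h.2.1))
      have hRL : RL r i (j :: α) β = stepX i j (RL r i α β) := rfl
      calc csum (RL r i (j :: α) β)
          ≤ ((r : ℝ) + 1) * csum (RL r i α β) := by rw [hRL]; exact hstep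
        _ ≤ ((r : ℝ) + 1) * ((r : ℝ) + 1) ^ (α.length + β.length) := by
            apply mul_le_mul_of_nonneg_left ih
            positivity
        _ = ((r : ℝ) + 1) ^ ((j :: α).length + β.length) := by
            rw [List.length_cons]
            rw [show α.length + 1 + β.length = (α.length + β.length) + 1 by omega, pow_succ]
            ring

lemma TS_bound {v : (Fin m → ℝ) → EuclideanSpace ℝ (Fin n)} (i : Fin m)
    {B δ : ℝ} {e r : ℕ} (hB : 0 ≤ B)
    (hBu : ∀ γ : List (Fin m), γ.length ≤ r → ∀ x, ‖uD v γ x‖ ≤ B)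
    (hδ0 : 0 ≤ δ) (hδ1 : δ ≤ 1) (p : (Fin m → ℝ) × (Fin m → ℝ)) (hp : |p.2 i - p.1 i| ≤ δ) :
    ∀ L : List (ℝ × ℕ × List (Fin m)),
      (∀ t ∈ L, t.1 = 0 ∨ (e ≤ t.2.1 ∧ t.2.2.length ≤ r)) →
      ‖TS v i L p‖ ≤ csum L * (B * δ ^ e)
  | [], _ => by simp [TS_nil, csum]
  | t :: L, h => by
      have ih := TS_bound i hB hBu hδ0 hδ1 p hp L (fun s hs => h s (List.mem_cons_of_mem _ hs))
      have hcs : csum (t :: L) = |t.1| + csum L := by simp [csum]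
      have hterm : ‖t.1 • TT v i t.2.1 t.2.2 p‖ ≤ |t.1| * (B * δ ^ e) := by
        rcases h t List.mem_cons_self with h0 | ⟨h1, h2⟩
        · simp [h0]
        · rw [norm_smul, Real.norm_eq_abs]
          apply mul_le_mul_of_nonneg_left _ (abs_nonneg _)
          have hTT : ‖TT v i t.2.1 t.2.2 p‖ = |p.2 i - p.1 i| ^ t.2.1 * ‖uD v t.2.2 p.1‖ := by
            rw [TT, norm_smul, Real.norm_eq_abs, abs_pow]
          rw [hTT]
          calc |p.2 i - p.1 i| ^ t.2.1 * ‖uD v t.2.2 p.1‖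
              ≤ δ ^ t.2.1 * B := by
                apply mul_le_mul (pow_le_pow_left₀ (abs_nonneg _) hp _)
                  (hBu t.2.2 h2 p.1) (norm_nonneg _) (pow_nonneg hδ0 _)
            _ ≤ δ ^ e * B := by
                apply mul_le_mul_of_nonneg_right _ hB
                exact pow_le_pow_of_le_one hδ0 hδ1 h1
            _ = B * δ ^ e := by ring
      have hns : ‖TS v i (t :: L) p‖ ≤ ‖t.1 • TT v i t.2.1 t.2.2 p‖ + ‖TS v i L p‖ := by
        rw [TS_cons]
        exact norm_add_le _ _
      rw [hcs]
      have hBe : 0 ≤ B * δ ^ e := by positivity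
      nlinarith [norm_nonneg (TS v i L p)]

lemma rep_TS {v : (Fin m → ℝ) → EuclideanSpace ℝ (Fin n)} (hv : ContDiff ℝ (⊤ : ℕ∞) v)
    (i : Fin m) (r : ℕ)
    {h : (Fin m → ℝ) × (Fin m → ℝ) → EuclideanSpace ℝ (Fin n)}
    (hh : ∀ x y, h (x, y) = (y i - x i) ^ r • v x) :
    ∀ α β : List (Fin m), pdersX α (pdersY β h) = TS v i (RL r i α β) := by
  have hbase : h = TS v i [(1, r, [])] := by
    funext p
    have := hh p.1 p.2
    simp only [Prod.mk.eta] at this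
    rw [this]
    simp [TS, TT, uD]
  have hY : ∀ β : List (Fin m),
      pdersY β h = TS v i (β.foldr (fun j L => stepY i j L) [(1, r, [])]) := by
    intro β
    induction β with
    | nil => simpa [pdersY] using hbase
    | cons j β ih =>
        have : pdersY (j :: β) h = pderY j (pdersY β h) := rfl
        rw [this, ih, pderY_TS hv i j]
        rfl
  intro α β
  induction α with
  | nil => simpa [pdersX, RL] using hY β
  | cons j α ih =>
      have : pdersX (j :: α) (pdersY β h) = pderX j (pdersX α (pdersY β h)) := rfl
      rw [this, ih, pderX_TS hv i j]
      rfl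

end Aux2

theorem stmt5 (m n r : ℕ) (hr : 1 ≤ r)
    (v : (Fin (m + 1) → ℝ) → EuclideanSpace ℝ (Fin n)) (hv : ContDiff ℝ (⊤ : ℕ∞) v)
    (h : (Fin (m + 1) → ℝ) × (Fin (m + 1) → ℝ) → EuclideanSpace ℝ (Fin n))
    (hh : ∀ x y, h (x, y) = (y 0 - x 0) ^ r • v x)
    (B : ℝ)
    (hvb : ∀ γ : List (Fin (m + 1)), γ.length ≤ r → ∀ x y,
      ‖pdersX γ (fun p => v p.1) (x, y)‖ ≤ B) :
    ∃ C : ℝ, 0 < C ∧ ∀ (α β : List (Fin (m + 1))), α.length + β.length ≤ r →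
      ∀ δ : ℝ, 0 < δ → δ ≤ 1 → ∀ x y : Fin (m + 1) → ℝ, |y 0 - x 0| < δ →
        ‖pdersX α (pdersY β h) (x, y)‖ ≤ C * δ ^ (r - (α.count 0 + β.count 0)) := by
  have hBu : ∀ γ : List (Fin (m + 1)), γ.length ≤ r → ∀ x, ‖uD v γ x‖ ≤ B := by
    intro γ hγ x
    have := hvb γ hγ x x
    rwa [uD_eq hv γ] at this
  have hB : 0 ≤ B := le_trans (norm_nonneg _) (hBu [] (by simp) (fun _ => 0))
  refine ⟨((r : ℝ) + 1) ^ r * B + 1, by positivity, ?_⟩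
  intro α β hαβ δ hδ0 hδ1 x y hxy
  set e := r - (α.count 0 + β.count 0) with he
  rw [rep_TS hv 0 r hh α β]
  have hinv := Inv_RL (m := m + 1) r 0 α β
  have hsum := csum_RL (m := m + 1) r 0 α β
  have hbound := TS_bound (r := r) (e := e) (0 : Fin (m + 1)) hB hBu (le_of_lt hδ0) hδ1 (x, y)
    (le_of_lt hxy) (RL r 0 α β) ?_
  · calc ‖TS v 0 (RL r 0 α β) (x, y)‖
        ≤ csum (RL r 0 α β) * (B * δ ^ e) := hbound
      _ ≤ ((r : ℝ) + 1) ^ (α.length + β.length) * (B * δ ^ e) := by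
          apply mul_le_mul_of_nonneg_right hsum
          positivity
      _ ≤ ((r : ℝ) + 1) ^ r * (B * δ ^ e) := by
          apply mul_le_mul_of_nonneg_right _ (by positivity)
          exact pow_le_pow_right₀ (by linarith [Nat.cast_nonneg (α := ℝ) r]) hαβ
      _ ≤ (((r : ℝ) + 1) ^ r * B + 1) * δ ^ e := by
          have h1 : (0:ℝ) ≤ δ ^ e := by positivity
          nlinarith
  · intro t ht
    rcases hinv t ht with h0 | ⟨h1, h2, h3⟩
    · exact Or.inl h0
    · refine Or.inr ⟨by omega, by omega⟩
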